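/- arXiv:1901.07839 — 2 statements merged into one kernel-verified Lean document; each statement's English description precedes it below -/
import Mathlib

section
/- Consider a finite MDP (S, A, P) with bounded reward function R : S × A → ℝ. If there exists a state s* ∈ S that is recurrent under every stationary policy, then the optimal expected average reward sup_π lim_{T→∞} (1/T) Σ_{k=0}^{T−1} E[R(s_k, a_k)] is independent of the initial state s₀. -/
open Filter Topology MeasureTheory

section MDPDefs

variable {S A : Type*} [Fintype S] [Fintype A] [DecidableEq S] [DecidableEq A]

/-- `P` is a valid transition kernel for a finite MDP: each `P s a ·` is a
probability distribution on states. -/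
def IsKernel (P : S → A → S → ℝ) : Prop :=
  (∀ s a s', 0 ≤ P s a s') ∧ ∀ s a, (∑ s' : S, P s a s') = 1

/-- A (randomized) stationary policy: each `π s ·` is a probability
distribution on actions. -/
def IsPolicy (π : S → A → ℝ) : Prop :=
  (∀ s a, 0 ≤ π s a) ∧ ∀ s, (∑ a : A, π s a) = 1

/-- The deterministic policy associated with `f : S → A`. -/
def detPol (f : S → A) : S → A → ℝ := fun s a => if a = f s then 1 else 0

/-- The distribution of the state-action pair `(s_k, a_k)` of the Markov chain
induced by policy `π`, transition kernel `P` and initial state `s₀`. -/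
noncomputable def stepDist (P : S → A → S → ℝ) (π : S → A → ℝ) (s₀ : S) :
    ℕ → S × A → ℝ
  | 0 => fun p => (if p.1 = s₀ then (1 : ℝ) else 0) * π p.1 p.2
  | n + 1 => fun p =>
      (∑ q : S × A, stepDist P π s₀ n q * P q.1 q.2 p.1) * π p.1 p.2

/-- `E[R(s_k, a_k)]` for the chain induced by `π` from `s₀`. -/
noncomputable def expRw (P : S → A → S → ℝ) (π : S → A → ℝ) (s₀ : S)
    (R : S → A → ℝ) (k : ℕ) : ℝ :=
  ∑ p : S × A, stepDist P π s₀ k p * R p.1 p.2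

/-- Discounted value `Σ_k γ^k E[R(s_k,a_k)]` of policy `π` from `s₀`. -/
noncomputable def discVal (P : S → A → S → ℝ) (π : S → A → ℝ) (s₀ : S)
    (R : S → A → ℝ) (γ : ℝ) : ℝ :=
  ∑' k : ℕ, γ ^ k * expRw P π s₀ R k

/-- The running average `(1/T) Σ_{k<T} E[R(s_k,a_k)]`. -/
noncomputable def avgSeq (P : S → A → S → ℝ) (π : S → A → ℝ) (s₀ : S)
    (R : S → A → ℝ) (T : ℕ) : ℝ :=
  (∑ k ∈ Finset.range T, expRw P π s₀ R k) / (T : ℝ)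

/-- Optimal expected average reward from initial state `s₀`:
`sup_π lim_T (1/T) Σ_{k<T} E[R(s_k,a_k)]`. -/
noncomputable def optAvg (P : S → A → S → ℝ) (s₀ : S) (R : S → A → ℝ) : ℝ :=
  sSup {v : ℝ | ∃ π : S → A → ℝ, IsPolicy π ∧
    Tendsto (avgSeq P π s₀ R) atTop (nhds v)}

/-- Transition matrix of the Markov chain on `S` induced by policy `π`. -/
noncomputable def polMatrix (P : S → A → S → ℝ) (π : S → A → ℝ) :
    Matrix S S ℝ :=
  Matrix.of fun s s' => ∑ a : A, π s a * P s a s'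

/-- Unichain MDP: for every stationary policy the induced chain is ergodic,
i.e. every state is reachable from every other state. -/
def Unichain (P : S → A → S → ℝ) : Prop :=
  ∀ π : S → A → ℝ, IsPolicy π → ∀ s s' : S,
    ∃ n : ℕ, 1 ≤ n ∧ 0 < ((polMatrix P π) ^ n) s s'

/-- `sstar` is recurrent (reachable from every state) under every stationary
policy. -/
def RecurrentForAll (P : S → A → S → ℝ) (sstar : S) : Prop :=
  ∀ π : S → A → ℝ, IsPolicy π → ∀ s : S,
    ∃ n : ℕ, 1 ≤ n ∧ 0 < ((polMatrix P π) ^ n) s sstar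

/-- `(st, ac)` is a trajectory of the MDP with kernel `P` under the probability
measure `μ`: the finite-dimensional distributions satisfy the Markov
transition law. -/
def IsTraj {Ω : Type*} [MeasurableSpace Ω] (μ : Measure Ω)
    (P : S → A → S → ℝ) (st : ℕ → Ω → S) (ac : ℕ → Ω → A) : Prop :=
  ∀ (k : ℕ) (h : ℕ → S × A) (s' : S),
    μ {ω | (∀ i ≤ k, (st i ω, ac i ω) = h i) ∧ st (k + 1) ω = s'}
      = μ {ω | ∀ i ≤ k, (st i ω, ac i ω) = h i}
          * ENNReal.ofReal (P (h k).1 (h k).2 s')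

/-- Policy `π` is feasible for the peak constraints `r^j(s_k,a_k) ≥ 0`
(holding with probability 1 for all times `k`): every state-action pair that
has positive probability at some time satisfies all constraints. -/
def Feasible {J : ℕ} (P : S → A → S → ℝ) (π : S → A → ℝ) (s₀ : S)
    (rc : Fin J → S → A → ℝ) : Prop :=
  ∀ (k : ℕ) (p : S × A), stepDist P π s₀ k p ≠ 0 → ∀ j, 0 ≤ rc j p.1 p.2

/-- Truncated Lagrangian reward
`R̄(s,a) = max(-C, inf_{λ ≥ 0} (r(s,a) + Σ_j λ_j r^j(s,a)))`, with the infimum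
taken in the extended reals. -/
noncomputable def Rbar {J : ℕ} (r : S → A → ℝ) (rc : Fin J → S → A → ℝ)
    (C : ℝ) (s : S) (a : A) : ℝ :=
  (max ((-C : ℝ) : EReal)
    (⨅ lam : {l : Fin J → ℝ // ∀ j, 0 ≤ l j},
      ((r s a + ∑ j : Fin J, lam.1 j * rc j s a : ℝ) : EReal))).toReal

/-- Number of visits to `(s,a)` among times `1, …, t`. -/
def Nvis {Ω : Type*} (st : ℕ → Ω → S) (ac : ℕ → Ω → A)
    (t : ℕ) (s : S) (a : A) (ω : Ω) : ℕ :=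
  ∑ k ∈ Finset.Icc 1 t, (if (st k ω, ac k ω) = (s, a) then 1 else 0)

end MDPDefs

/-! Fix a policy, let `M` be its transition matrix and `g` its expected one-step reward.
The running average from `s` is `h_T s`, where `h_T = T⁻¹ • ∑_{k<T} M ^ k *ᵥ g`, and
`M *ᵥ h_T - h_T = T⁻¹ • (M ^ T *ᵥ g - g)` is `O(1/T)`. A function `v` with
`|M *ᵥ v - v| ≤ δ` is almost constant: if `v` is maximal at `s` and `s*` is reached from `s`
in `n` steps with probability `p > 0`, then `p * (v s - v s*) ≤ v s - (M ^ n *ᵥ v) s ≤ n * δ`,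
and symmetrically at a minimum of `v`. Hence `h_T s₀ - h_T s₀' → 0`, so every policy has the
same limiting average from both initial states. -/

open Finset Matrix

namespace Matrix

variable {S : Type*} [Fintype S] [DecidableEq S] {M : Matrix S S ℝ}

lemma abs_mulVec_le_of_mem_rowStochastic (hM : M ∈ rowStochastic ℝ S) {v : S → ℝ} {c : ℝ}
    (hv : ∀ t, |v t| ≤ c) (s : S) : |(M *ᵥ v) s| ≤ c :=
  calc |∑ t, M s t * v t| ≤ ∑ t, M s t * c := by
        refine (abs_sum_le_sum_abs _ _).trans (sum_le_sum fun t _ => ?_)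
        rw [abs_mul, abs_of_nonneg (hM.1 s t)]
        exact mul_le_mul_of_nonneg_left (hv t) (hM.1 s t)
    _ = c := by rw [← sum_mul, sum_row_of_mem_rowStochastic hM, one_mul]

lemma abs_pow_mulVec_sub_le (hM : M ∈ rowStochastic ℝ S) {v : S → ℝ} {δ : ℝ}
    (hv : ∀ s, |(M *ᵥ v) s - v s| ≤ δ) (n : ℕ) (s : S) :
    |(M ^ n *ᵥ v) s - v s| ≤ n * δ := by
  induction n generalizing s with
  | zero => simp
  | succ n ih =>
    have hsplit : (M ^ (n + 1) *ᵥ v) s - v s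
        = (M ^ n *ᵥ (M *ᵥ v - v)) s + ((M ^ n *ᵥ v) s - v s) := by
      rw [mulVec_sub, pow_succ, ← mulVec_mulVec, Pi.sub_apply]
      ring
    rw [hsplit, Nat.cast_succ, add_one_mul, add_comm (n * δ)]
    exact (abs_add_le _ _).trans
      (add_le_add (abs_mulVec_le_of_mem_rowStochastic (pow_mem hM n) hv s) (ih s))

lemma mul_sub_le_sub_mulVec_of_forall_le (hM : M ∈ rowStochastic ℝ S) {v : S → ℝ} {s : S}
    (hs : ∀ t, v t ≤ v s) (t₀ : S) : M s t₀ * (v s - v t₀) ≤ v s - (M *ᵥ v) s := by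
  have hexp : v s - (M *ᵥ v) s = ∑ t, M s t * (v s - v t) := by
    simp only [mul_sub, sum_sub_distrib, ← sum_mul, sum_row_of_mem_rowStochastic hM, one_mul]
    rfl
  rw [hexp]
  exact single_le_sum (fun t _ => mul_nonneg (hM.1 s t) (sub_nonneg.2 (hs t))) (mem_univ t₀)

lemma exists_sub_le_of_abs_mulVec_sub_le (hM : M ∈ rowStochastic ℝ S) {s₁ : S}
    (hreach : ∀ s, ∃ n, 0 < (M ^ n) s s₁) :
    ∃ C, ∀ (v : S → ℝ) (δ : ℝ), (∀ s, |(M *ᵥ v) s - v s| ≤ δ) →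
      ∀ s, v s - v s₁ ≤ C * δ := by
  choose n hn using hreach
  -- the sum dominates `n s / (M ^ n s) s s₁` for whichever `s` turns out to maximise `v`
  refine ⟨∑ s, n s / (M ^ n s) s s₁, fun v δ hv s => ?_⟩
  have : Nonempty S := ⟨s₁⟩
  obtain ⟨smax, hmax⟩ := Finite.exists_max v
  have hdoeblin := mul_sub_le_sub_mulVec_of_forall_le (pow_mem hM (n smax)) hmax s₁
  have hdefect := abs_sub_le_iff.1 (abs_pow_mulVec_sub_le hM hv (n smax) smax)
  calc v s - v s₁ ≤ v smax - v s₁ := by linarith [hmax s]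
    _ ≤ n smax / (M ^ n smax) smax s₁ * δ := by
      rw [div_mul_eq_mul_div, le_div_iff₀ (hn smax)]
      linarith
    _ ≤ (∑ s, n s / (M ^ n s) s s₁) * δ := by
      refine mul_le_mul_of_nonneg_right ?_ ((abs_nonneg _).trans (hv s))
      exact single_le_sum (fun s _ => div_nonneg (Nat.cast_nonneg _) (hn s).le) (mem_univ smax)

theorem exists_abs_sub_le_of_abs_mulVec_sub_le (hM : M ∈ rowStochastic ℝ S) {s₁ : S}
    (hreach : ∀ s, ∃ n, 0 < (M ^ n) s s₁) :
    ∃ C, ∀ (v : S → ℝ) (δ : ℝ), (∀ s, |(M *ᵥ v) s - v s| ≤ δ) →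
      ∀ s s', |v s - v s'| ≤ C * δ := by
  obtain ⟨C, hC⟩ := exists_sub_le_of_abs_mulVec_sub_le hM hreach
  refine ⟨2 * C, fun v δ hv s s' => ?_⟩
  have hneg : ∀ s, |(M *ᵥ -v) s - (-v) s| ≤ δ := fun s => by
    simpa only [mulVec_neg, Pi.neg_apply, neg_sub_neg, abs_sub_comm] using hv s
  have hlower : ∀ s, v s₁ - v s ≤ C * δ := fun s => by
    simpa only [Pi.neg_apply, neg_sub_neg] using hC (-v) δ hneg s
  exact abs_sub_le_iff.2
    ⟨by linarith [hC v δ hv s, hlower s'], by linarith [hC v δ hv s', hlower s]⟩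

noncomputable def cesaroMean (M : Matrix S S ℝ) (g : S → ℝ) (T : ℕ) : S → ℝ :=
  (T : ℝ)⁻¹ • ∑ k ∈ range T, M ^ k *ᵥ g

lemma mulVec_cesaroMean_sub (M : Matrix S S ℝ) (g : S → ℝ) (T : ℕ) :
    M *ᵥ cesaroMean M g T - cesaroMean M g T = (T : ℝ)⁻¹ • (M ^ T *ᵥ g - g) := by
  rw [cesaroMean, mulVec_smul, mulVec_sum, ← smul_sub, ← sum_sub_distrib]
  simp only [mulVec_mulVec, ← pow_succ']
  rw [sum_range_sub (fun k => M ^ k *ᵥ g), pow_zero, one_mulVec]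

lemma abs_mulVec_cesaroMean_sub_le (hM : M ∈ rowStochastic ℝ S) (g : S → ℝ) (T : ℕ)
    (s : S) :
    |(M *ᵥ cesaroMean M g T) s - cesaroMean M g T s| ≤ 2 * ‖g‖ / T := by
  have hg : ∀ t, |g t| ≤ ‖g‖ := norm_le_pi_norm g
  rw [← Pi.sub_apply, mulVec_cesaroMean_sub, Pi.smul_apply, smul_eq_mul, abs_mul,
    abs_inv, Nat.abs_cast, inv_mul_eq_div]
  gcongr
  calc |(M ^ T *ᵥ g - g) s| ≤ |(M ^ T *ᵥ g) s| + |g s| := abs_sub _ _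
    _ ≤ 2 * ‖g‖ := by linarith [abs_mulVec_le_of_mem_rowStochastic (pow_mem hM T) hg s, hg s]

theorem tendsto_cesaroMean_sub (hM : M ∈ rowStochastic ℝ S) {s₁ : S}
    (hreach : ∀ s, ∃ n, 0 < (M ^ n) s s₁) (g : S → ℝ) (s s' : S) :
    Tendsto (fun T => cesaroMean M g T s - cesaroMean M g T s') atTop (𝓝 0) := by
  obtain ⟨C, hC⟩ := exists_abs_sub_le_of_abs_mulVec_sub_le hM hreach
  have hlim : Tendsto (fun T : ℕ => C * (2 * ‖g‖ / T)) atTop (𝓝 0) := by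
    simpa using (tendsto_const_div_atTop_nhds_zero_nat (2 * ‖g‖)).const_mul C
  exact squeeze_zero_norm (fun T => hC _ _ (abs_mulVec_cesaroMean_sub_le hM g T) s s') hlim

end Matrix

section MDP

variable {S A : Type*} [Fintype S] [Fintype A] [DecidableEq S]

lemma polMatrix_mem_rowStochastic {P : S → A → S → ℝ} (hP : IsKernel P) {π : S → A → ℝ}
    (hπ : IsPolicy π) : polMatrix P π ∈ rowStochastic ℝ S := by
  refine mem_rowStochastic_iff_sum.2
    ⟨fun s s' => sum_nonneg fun a _ => mul_nonneg (hπ.1 s a) (hP.1 s a s'), fun s => ?_⟩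
  simp only [polMatrix, of_apply]
  rw [sum_comm]
  simp only [← mul_sum, hP.2, mul_one]
  exact hπ.2 s

lemma stepDist_eq_polMatrix_pow_mul (P : S → A → S → ℝ) (π : S → A → ℝ) (s₀ : S) (k : ℕ)
    (p : S × A) :
    stepDist P π s₀ k p = (polMatrix P π ^ k) s₀ p.1 * π p.1 p.2 := by
  induction k generalizing p with
  | zero => simp [stepDist, one_apply, eq_comm]
  | succ k ih =>
    simp only [stepDist, ih, pow_succ, mul_apply, Fintype.sum_prod_type, polMatrix, of_apply,
      mul_sum]
    congr 1
    exact sum_congr rfl fun s _ => sum_congr rfl fun a _ => by ring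

lemma expRw_eq_polMatrix_pow_mulVec (P : S → A → S → ℝ) (π : S → A → ℝ) (s₀ : S)
    (R : S → A → ℝ) (k : ℕ) :
    expRw P π s₀ R k = (polMatrix P π ^ k *ᵥ fun s => ∑ a, π s a * R s a) s₀ := by
  simp only [expRw, Fintype.sum_prod_type, stepDist_eq_polMatrix_pow_mul, mulVec, dotProduct,
    mul_sum]
  exact sum_congr rfl fun s _ => sum_congr rfl fun a _ => by ring

lemma avgSeq_eq_cesaroMean (P : S → A → S → ℝ) (π : S → A → ℝ) (s₀ : S) (R : S → A → ℝ) :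
    avgSeq P π s₀ R =
      fun T => cesaroMean (polMatrix P π) (fun s => ∑ a, π s a * R s a) T s₀ := by
  funext T
  simp only [avgSeq, expRw_eq_polMatrix_pow_mulVec, cesaroMean, Pi.smul_apply, smul_eq_mul,
    Finset.sum_apply, div_eq_inv_mul]

theorem tendsto_avgSeq_sub {P : S → A → S → ℝ} (hP : IsKernel P) {sstar : S}
    (hrec : RecurrentForAll P sstar) {π : S → A → ℝ} (hπ : IsPolicy π) (R : S → A → ℝ)
    (s s' : S) :
    Tendsto (fun T => avgSeq P π s R T - avgSeq P π s' R T) atTop (𝓝 0) := by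
  simp only [avgSeq_eq_cesaroMean]
  exact tendsto_cesaroMean_sub (polMatrix_mem_rowStochastic hP hπ)
    (fun s => (hrec π hπ s).imp fun _ h => h.2) _ s s'

end MDP

theorem stmt1_general {S A : Type*} [Fintype S] [Fintype A]
    [DecidableEq S]
    (P : S → A → S → ℝ) (hP : IsKernel P) (R : S → A → ℝ)
    (sstar : S) (hrec : RecurrentForAll P sstar) :
    ∀ s₀ s₀' : S, optAvg P s₀ R = optAvg P s₀' R := by
  have transfer : ∀ π v s s', IsPolicy π → Tendsto (avgSeq P π s R) atTop (𝓝 v) →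
      Tendsto (avgSeq P π s' R) atTop (𝓝 v) := fun π v s s' hπ hv => by
    simpa using hv.sub (tendsto_avgSeq_sub hP hrec hπ R s s')
  intro s₀ s₀'
  unfold optAvg
  congr 1
  ext v
  exact ⟨fun ⟨π, hπ, hv⟩ => ⟨π, hπ, transfer π v _ _ hπ hv⟩,
    fun ⟨π, hπ, hv⟩ => ⟨π, hπ, transfer π v _ _ hπ hv⟩⟩

/-- For a finite MDP with bounded reward, if some state `s*`
is recurrent under every stationary policy, then the optimal expected average
reward `sup_π lim_T (1/T) Σ_{k<T} E[R(s_k,a_k)]` does not depend on the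
initial state. -/
theorem stmt1 {S A : Type*} [Fintype S] [Fintype A]
    [DecidableEq S] [DecidableEq A] [Nonempty S] [Nonempty A]
    (P : S → A → S → ℝ) (hP : IsKernel P) (R : S → A → ℝ)
    (sstar : S) (hrec : RecurrentForAll P sstar) :
    ∀ s₀ s₀' : S, optAvg P s₀ R = optAvg P s₀' R :=
  stmt1_general P hP R sstar hrec
end

section
/- Let (S, A, P) be a finite MDP, γ ∈ (0,1), and let r, r^1, …, r^J : S × A → ℝ satisfy |r(s,a)| ≤ c and |r^j(s,a)| ≤ c for all (s,a) and j. Set C = cγ/(1−γ) and R̄(s,a) = max(−C, inf_{λ∈ℝ^J, λ≥0} (r(s,a) + Σ_{j=1}^J λ_j r^j(s,a))). Suppose Q* : S × A → ℝ satisfies Q*(s,a) = R̄(s,a) + γ Σ_{s'∈S} P(s,a,s') max_{a'∈A} Q*(s',a') for all (s,a). Then for every (s,a) ∈ S × A such that r^j(s,a) < 0 for some j ∈ {1,…,J}, one has Q*(s,a) ≤ 0. -/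
open Filter Topology MeasureTheory

/-- For the truncated Lagrangian reward with
`C = cγ/(1-γ)`, any fixed point `Q*` of the corresponding discounted Bellman
equation satisfies `Q*(s,a) ≤ 0` at every state-action pair violating some
constraint (`r^j(s,a) < 0` for some `j`). -/
theorem stmt11 {S A : Type*} [Fintype S] [Fintype A]
    [DecidableEq S] [DecidableEq A] [Nonempty S] [Nonempty A]
    {J : ℕ} (hJ : 0 < J)
    (P : S → A → S → ℝ) (hP : IsKernel P)
    (γ : ℝ) (hγ0 : 0 < γ) (hγ1 : γ < 1) (c : ℝ)
    (r : S → A → ℝ) (rc : Fin J → S → A → ℝ)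
    (hr : ∀ s a, |r s a| ≤ c) (hrc : ∀ j s a, |rc j s a| ≤ c)
    (Qstar : S → A → ℝ)
    (hQ : ∀ s a, Qstar s a = Rbar r rc (c * γ / (1 - γ)) s a
        + γ * ∑ s' : S, P s a s' * (⨆ a' : A, Qstar s' a')) :
    ∀ s a, (∃ j, rc j s a < 0) → Qstar s a ≤ 0 := by
  intro s a ⟨j, hj⟩
  set C := c * γ / (1 - γ) with hC
  have hg1 : 0 < 1 - γ := by linarith
  have hc : 0 ≤ c := le_trans (abs_nonneg _) (hr (Classical.arbitrary S) (Classical.arbitrary A))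
  have hCnn : 0 ≤ C := by positivity
  -- Rbar is at most c everywhere
  have hRub : ∀ s a, Rbar r rc C s a ≤ c := by
    intro s a
    have h0 : (⨅ lam : {l : Fin J → ℝ // ∀ j, 0 ≤ l j},
        ((r s a + ∑ j : Fin J, lam.1 j * rc j s a : ℝ) : EReal)) ≤
        ((r s a : ℝ) : EReal) := by
      have := iInf_le (fun lam : {l : Fin J → ℝ // ∀ j, 0 ≤ l j} =>
        ((r s a + ∑ j : Fin J, lam.1 j * rc j s a : ℝ) : EReal))
        ⟨fun _ => 0, fun _ => le_refl 0⟩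
      simpa using this
    have hle : (max ((-C : ℝ) : EReal)
        (⨅ lam : {l : Fin J → ℝ // ∀ j, 0 ≤ l j},
          ((r s a + ∑ j : Fin J, lam.1 j * rc j s a : ℝ) : EReal))) ≤ ((c : ℝ) : EReal) := by
      apply max_le
      · exact_mod_cast (by linarith : -C ≤ c)
      · exact le_trans h0 (by exact_mod_cast (le_of_abs_le (hr s a)))
    have hnb : (max ((-C : ℝ) : EReal)
        (⨅ lam : {l : Fin J → ℝ // ∀ j, 0 ≤ l j},
          ((r s a + ∑ j : Fin J, lam.1 j * rc j s a : ℝ) : EReal))) ≠ ⊥ := by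
      intro h
      have := le_max_left ((-C : ℝ) : EReal) (⨅ lam : {l : Fin J → ℝ // ∀ j, 0 ≤ l j},
          ((r s a + ∑ j : Fin J, lam.1 j * rc j s a : ℝ) : EReal))
      rw [h] at this
      exact EReal.coe_ne_bot (-C) (le_bot_iff.mp this)
    have := EReal.toReal_le_toReal hle hnb (EReal.coe_ne_top c)
    simpa [Rbar] using this
  -- maximum of Qstar
  obtain ⟨p, hp⟩ := Finite.exists_max (fun p : S × A => Qstar p.1 p.2)
  set M := Qstar p.1 p.2 with hM
  have hsupM : ∀ s', (⨆ a' : A, Qstar s' a') ≤ M := by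
    intro s'
    exact ciSup_le fun a' => hp (s', a')
  have hsum : ∀ s a, (∑ s' : S, P s a s' * (⨆ a' : A, Qstar s' a')) ≤ M := by
    intro s a
    calc (∑ s' : S, P s a s' * (⨆ a' : A, Qstar s' a'))
        ≤ ∑ s' : S, P s a s' * M :=
          Finset.sum_le_sum fun s' _ =>
            mul_le_mul_of_nonneg_left (hsupM s') (hP.1 s a s')
      _ = M := by rw [← Finset.sum_mul, hP.2 s a, one_mul]
  -- M ≤ c/(1-γ)
  have hMb : M ≤ c / (1 - γ) := by
    have h1 : M ≤ c + γ * M := by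
      linarith [hQ p.1 p.2, hRub p.1 p.2,
        mul_le_mul_of_nonneg_left (hsum p.1 p.2) hγ0.le, hM.le, hM.ge]
    rw [le_div_iff₀ hg1]; nlinarith
  -- Rbar at the violating pair equals -C
  have hRval : Rbar r rc C s a = -C := by
    set lam0 : Fin J → ℝ := fun j' => if j' = j then (c + C) / (-rc j s a) else 0 with hlam0
    have hlamnn : ∀ j', 0 ≤ lam0 j' := by
      intro j'
      by_cases h : j' = j
      · simp only [hlam0, h, if_pos rfl]
        apply div_nonneg (by linarith) (by linarith)
      · simp [hlam0, h]
    have hval : r s a + ∑ j' : Fin J, lam0 j' * rc j' s a ≤ -C := by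
      have hsum0 : ∑ j' : Fin J, lam0 j' * rc j' s a = (c + C) / (-rc j s a) * rc j s a := by
        rw [Finset.sum_eq_single j]
        · simp [hlam0]
        · intro b _ hb; simp [hlam0, hb]
        · intro h; exact absurd (Finset.mem_univ j) h
      rw [hsum0]
      have hne : rc j s a ≠ 0 := ne_of_lt hj
      have hne' : -rc j s a ≠ 0 := neg_ne_zero.mpr hne
      have : (c + C) / (-rc j s a) * rc j s a = -(c + C) := by
        calc (c + C) / (-rc j s a) * rc j s a
            = -((c + C) / (-rc j s a) * (-rc j s a)) := by ring
          _ = -(c + C) := by rw [div_mul_cancel₀ _ hne']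
      rw [this]
      have := le_of_abs_le (hr s a)
      linarith
    have hinf : (⨅ lam : {l : Fin J → ℝ // ∀ j, 0 ≤ l j},
        ((r s a + ∑ j : Fin J, lam.1 j * rc j s a : ℝ) : EReal)) ≤ ((-C : ℝ) : EReal) := by
      refine le_trans (iInf_le _ ⟨lam0, hlamnn⟩) ?_
      exact_mod_cast hval
    have : max ((-C : ℝ) : EReal) (⨅ lam : {l : Fin J → ℝ // ∀ j, 0 ≤ l j},
        ((r s a + ∑ j : Fin J, lam.1 j * rc j s a : ℝ) : EReal)) = ((-C : ℝ) : EReal) :=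
      max_eq_left hinf
    rw [Rbar, this, EReal.toReal_coe]
  -- conclude
  rw [hQ s a, hRval]
  have h1 := hsum s a
  have h2 : γ * (∑ s' : S, P s a s' * (⨆ a' : A, Qstar s' a')) ≤ γ * (c / (1 - γ)) :=
    mul_le_mul_of_nonneg_left (le_trans h1 hMb) (le_of_lt hγ0)
  have : C = γ * (c / (1 - γ)) := by rw [hC]; field_simp
  linarith
end
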